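/- arXiv:2605.13094 — 7 statements merged into one kernel-verified Lean document; each statement's English description precedes it below -/
import Mathlib

section
/- Let Y₁ = (1/5)(3,4,0,0,0,−6), Y₂ = (1/5)(0,3,4,16,0,0), Y₃ = (1/5)(−3,4,0,0,0,6), Y₄ = (0,0,1,0,0,0), Y₅ = −(1/5)(4,3,0,0,0,8), Y₆ = (1/5)(0,−3,4,−16,0,0), Y₇ = (1/5)(4,−3,0,0,0,8) in ℝ⁶. Then the solution set of the first-order loop constraint {x ∈ ℝ⁷ : x₁Y₁ + x₂Y₂ + x₃Y₃ + x₄Y₄ + x₅Y₅ + x₆Y₆ + x₇Y₇ = 0} is exactly the two-dimensional subspace {(s, t, s, −(8/5)t, (4/3)s, t, (4/3)s) : s, t ∈ ℝ}. -/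
/-!
Expanding the combination coordinatewise turns the constraint into a linear system (with `xᵢ`
for the Lean `x (i - 1)`). The fifth coordinate vanishes identically; the fourth forces
`x₆ = x₂`, and then the third gives `x₄`.
The first and last coordinates are the independent equations
`3(x₁ - x₃) = 4(x₅ - x₇)` and `3(x₁ - x₃) = -4(x₅ - x₇)`, so `x₃ = x₁` and `x₇ = x₅`,
after which the second coordinate reads `x₅ = (4/3) x₁`.
-/

/-- Joint screw coordinate vectors of the 7R linkage in the reference configuration. -/
noncomputable def Y1 : Fin 6 → ℝ := ![3/5, 4/5, 0, 0, 0, -6/5]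
noncomputable def Y2 : Fin 6 → ℝ := ![0, 3/5, 4/5, 16/5, 0, 0]
noncomputable def Y3 : Fin 6 → ℝ := ![-3/5, 4/5, 0, 0, 0, 6/5]
noncomputable def Y4 : Fin 6 → ℝ := ![0, 0, 1, 0, 0, 0]
noncomputable def Y5 : Fin 6 → ℝ := ![-4/5, -3/5, 0, 0, 0, -8/5]
noncomputable def Y6 : Fin 6 → ℝ := ![0, -3/5, 4/5, -16/5, 0, 0]
noncomputable def Y7 : Fin 6 → ℝ := ![4/5, -3/5, 0, 0, 0, 8/5]

open Matrix

theorem loopConstraint_eq_vec (x : Fin 7 → ℝ) :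
    x 0 • Y1 + x 1 • Y2 + x 2 • Y3 + x 3 • Y4 + x 4 • Y5 + x 5 • Y6 + x 6 • Y7 =
      ![3/5 * (x 0 - x 2) - 4/5 * (x 4 - x 6),
        4/5 * (x 0 + x 2) + 3/5 * (x 1 - x 5) - 3/5 * (x 4 + x 6),
        4/5 * (x 1 + x 5) + x 3,
        16/5 * (x 1 - x 5),
        0,
        -6/5 * (x 0 - x 2) - 8/5 * (x 4 - x 6)] := by
  simp only [Y1, Y2, Y3, Y4, Y5, Y6, Y7, smul_cons, smul_eq_mul, smul_empty, cons_add_cons,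
    empty_add_empty, vecCons_inj]
  refine ⟨?_, ?_, ?_, ?_, ?_, ?_, trivial⟩ <;> ring

theorem loopConstraint_eq_zero_iff (x : Fin 7 → ℝ) :
    x 0 • Y1 + x 1 • Y2 + x 2 • Y3 + x 3 • Y4 + x 4 • Y5 + x 5 • Y6 + x 6 • Y7 = 0 ↔
      x 2 = x 0 ∧ x 6 = x 4 ∧ x 5 = x 1 ∧ x 3 = -(8/5) * x 1 ∧ x 4 = 4/3 * x 0 := by
  simp only [loopConstraint_eq_vec, cons_eq_zero_iff, zero_empty, and_true, true_and]
  constructor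
  · rintro ⟨h₀, h₁, h₂, h₃, h₅⟩
    have h₂₀ : x 2 = x 0 := by linarith
    have h₆₄ : x 6 = x 4 := by linarith
    have h₅₁ : x 5 = x 1 := by linarith
    have h₃₁ : x 3 = -(8/5) * x 1 := by rw [h₅₁] at h₂; linarith
    have h₄₀ : x 4 = 4/3 * x 0 := by rw [h₂₀, h₆₄, h₅₁] at h₁; linarith
    exact ⟨h₂₀, h₆₄, h₅₁, h₃₁, h₄₀⟩
  · rintro ⟨h₂₀, h₆₄, h₅₁, h₃₁, h₄₀⟩
    refine ⟨?_, ?_, ?_, ?_, ?_⟩ <;> linarith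

/-- The solution set of the first-order loop constraint of the 7R linkage at the singular
reference configuration is the 2-dimensional subspace
`{(s, t, s, −(8/5)t, (4/3)s, t, (4/3)s) : s, t ∈ ℝ}`. -/
theorem firstOrderCone_7R :
    {x : Fin 7 → ℝ |
        x 0 • Y1 + x 1 • Y2 + x 2 • Y3 + x 3 • Y4 + x 4 • Y5 + x 5 • Y6 + x 6 • Y7 = 0} =
      {x : Fin 7 → ℝ | ∃ s t : ℝ,
        x = ![s, t, s, -(8/5) * t, (4/3) * s, t, (4/3) * s]} := by
  ext x
  rw [Set.mem_ofPred_eq, Set.mem_ofPred_eq, loopConstraint_eq_zero_iff]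
  constructor
  · rintro ⟨h₂₀, h₆₄, h₅₁, h₃₁, h₄₀⟩
    refine ⟨x 0, x 1, ?_⟩
    ext i
    fin_cases i <;> simp [h₂₀, h₆₄, h₅₁, h₃₁, h₄₀]
  · rintro ⟨s, t, rfl⟩
    simp
end

section
/- Let f₁, f₂ : ℝ¹³ → Matrix (Fin 4) (Fin 4) ℝ be f₁(q) = exp(q₁ M(Z₁)) · exp(q₂ M(Z₂)) · exp(q₃ M(Z₃)) · exp(q₄ M(Z₄)) · exp(q₅ M(Z₅)) · exp(q₆ M(Z₆)) · exp(q₇ M(Z₇)) · exp(q₈ M(Z₈)) · exp(q₉ M(Z₉)) and f₂(q) = exp(q₁₀ M(Z₁₀)) · exp(q₁₁ M(Z₁₁)) · exp(q₁₂ M(Z₁₂)) · exp(q₁₃ M(Z₁₃)) · exp(−q₉ M(Z₉)) · exp(−q₈ M(Z₈)) · exp(−q₇ M(Z₇)) · exp(−q₆ M(Z₆)), and let V = {q ∈ ℝ¹³ : f₁(q) = 1 and f₂(q) = 1}. For every C^∞ curve γ : ℝ → ℝ¹³ with γ(0) = 0 and γ(t) ∈ V for all t in some open interval around 0, the tangent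 vector γ'(0) lies in {(s, 0, −s, s, 0, 0, 0, −s, 0, −s, 0, 0, 0) : s ∈ ℝ} ∪ {(s, t, 0, 0, 0, −s, −t, 0, 0, 0, 0, −s, −t) : s, t ∈ ℝ}. -/
/-- The 4×4 matrix `M(Y)` of a screw coordinate vector `Y = (ω, v) ∈ ℝ³ × ℝ³`:
upper-left 3×3 block the skew-symmetric matrix `ω̂`, upper-right column `v`, last row zero. -/
noncomputable def Mscrew (Y : Fin 6 → ℝ) : Matrix (Fin 4) (Fin 4) ℝ :=
  !![0, -Y 2, Y 1, Y 3;
     Y 2, 0, -Y 0, Y 4;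
     -Y 1, Y 0, 0, Y 5;
     0, 0, 0, 0]

/-- Joint screw coordinate vectors of the two-loop 6-bar linkage in the reference
configuration (ordering `q₁, q₂, q₃,₁, q₃,₂, q₃,₃, q₄,₁, q₄,₂, q₅,₁, q₅,₂, q₆,₁, q₆,₂,
q₇,₁, q₇,₂`). -/
noncomputable def Z1 : Fin 6 → ℝ := ![1, 0, 0, 0, 0, 0]
noncomputable def Z2 : Fin 6 → ℝ := ![0, 0, 0, 1, 0, 0]
noncomputable def Z3 : Fin 6 → ℝ := ![1, 0, 0, 0, 0, -1]
noncomputable def Z4 : Fin 6 → ℝ := ![0, 1, 0, 0, 0, -1]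
noncomputable def Z5 : Fin 6 → ℝ := ![0, 0, 1, 1, 1, 0]
noncomputable def Z6 : Fin 6 → ℝ := ![1, 0, 0, 0, 0, 0]
noncomputable def Z7 : Fin 6 → ℝ := ![0, 0, 0, 1, 0, 0]
noncomputable def Z8 : Fin 6 → ℝ := ![0, 1, 0, 0, 0, 0]
noncomputable def Z9 : Fin 6 → ℝ := ![0, 0, 0, 0, 1, 0]
noncomputable def Z10 : Fin 6 → ℝ := ![0, 1, 0, 0, 0, 0]
noncomputable def Z11 : Fin 6 → ℝ := ![0, 0, 0, 0, 1, 0]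
noncomputable def Z12 : Fin 6 → ℝ := ![1, 0, 0, 0, 0, 0]
noncomputable def Z13 : Fin 6 → ℝ := ![0, 0, 0, 1, 0, 0]

/-- Constraint map of the first fundamental cycle of the 6-bar linkage. -/
noncomputable def f1 (q : Fin 13 → ℝ) : Matrix (Fin 4) (Fin 4) ℝ :=
  NormedSpace.exp (q 0 • Mscrew Z1) * NormedSpace.exp (q 1 • Mscrew Z2) *
  NormedSpace.exp (q 2 • Mscrew Z3) * NormedSpace.exp (q 3 • Mscrew Z4) *
  NormedSpace.exp (q 4 • Mscrew Z5) * NormedSpace.exp (q 5 • Mscrew Z6) *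
  NormedSpace.exp (q 6 • Mscrew Z7) * NormedSpace.exp (q 7 • Mscrew Z8) *
  NormedSpace.exp (q 8 • Mscrew Z9)

/-- Constraint map of the second fundamental cycle of the 6-bar linkage. -/
noncomputable def f2 (q : Fin 13 → ℝ) : Matrix (Fin 4) (Fin 4) ℝ :=
  NormedSpace.exp (q 9 • Mscrew Z10) * NormedSpace.exp (q 10 • Mscrew Z11) *
  NormedSpace.exp (q 11 • Mscrew Z12) * NormedSpace.exp (q 12 • Mscrew Z13) *
  NormedSpace.exp ((-q 8) • Mscrew Z9) * NormedSpace.exp ((-q 7) • Mscrew Z8) *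
  NormedSpace.exp ((-q 6) • Mscrew Z7) * NormedSpace.exp ((-q 5) • Mscrew Z6)

/-! ### Auxiliary machinery -/

abbrev Mat4 := Matrix (Fin 4) (Fin 4) ℝ

lemma vec6_four (a b c d e f : ℝ) : ![a,b,c,d,e,f] 4 = e := rfl
lemma vec6_five (a b c d e f : ℝ) : ![a,b,c,d,e,f] 5 = f := rfl

lemma v13_0 (a0 a1 a2 a3 a4 a5 a6 a7 a8 a9 a10 a11 a12 : ℝ) : ![a0, a1, a2, a3, a4, a5, a6, a7, a8, a9, a10, a11, a12] 0 = a0 := rfl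
lemma v13_1 (a0 a1 a2 a3 a4 a5 a6 a7 a8 a9 a10 a11 a12 : ℝ) : ![a0, a1, a2, a3, a4, a5, a6, a7, a8, a9, a10, a11, a12] 1 = a1 := rfl
lemma v13_2 (a0 a1 a2 a3 a4 a5 a6 a7 a8 a9 a10 a11 a12 : ℝ) : ![a0, a1, a2, a3, a4, a5, a6, a7, a8, a9, a10, a11, a12] 2 = a2 := rfl
lemma v13_3 (a0 a1 a2 a3 a4 a5 a6 a7 a8 a9 a10 a11 a12 : ℝ) : ![a0, a1, a2, a3, a4, a5, a6, a7, a8, a9, a10, a11, a12] 3 = a3 := rfl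
lemma v13_4 (a0 a1 a2 a3 a4 a5 a6 a7 a8 a9 a10 a11 a12 : ℝ) : ![a0, a1, a2, a3, a4, a5, a6, a7, a8, a9, a10, a11, a12] 4 = a4 := rfl
lemma v13_5 (a0 a1 a2 a3 a4 a5 a6 a7 a8 a9 a10 a11 a12 : ℝ) : ![a0, a1, a2, a3, a4, a5, a6, a7, a8, a9, a10, a11, a12] 5 = a5 := rfl
lemma v13_6 (a0 a1 a2 a3 a4 a5 a6 a7 a8 a9 a10 a11 a12 : ℝ) : ![a0, a1, a2, a3, a4, a5, a6, a7, a8, a9, a10, a11, a12] 6 = a6 := rfl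
lemma v13_7 (a0 a1 a2 a3 a4 a5 a6 a7 a8 a9 a10 a11 a12 : ℝ) : ![a0, a1, a2, a3, a4, a5, a6, a7, a8, a9, a10, a11, a12] 7 = a7 := rfl
lemma v13_8 (a0 a1 a2 a3 a4 a5 a6 a7 a8 a9 a10 a11 a12 : ℝ) : ![a0, a1, a2, a3, a4, a5, a6, a7, a8, a9, a10, a11, a12] 8 = a8 := rfl
lemma v13_9 (a0 a1 a2 a3 a4 a5 a6 a7 a8 a9 a10 a11 a12 : ℝ) : ![a0, a1, a2, a3, a4, a5, a6, a7, a8, a9, a10, a11, a12] 9 = a9 := rfl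
lemma v13_10 (a0 a1 a2 a3 a4 a5 a6 a7 a8 a9 a10 a11 a12 : ℝ) : ![a0, a1, a2, a3, a4, a5, a6, a7, a8, a9, a10, a11, a12] 10 = a10 := rfl
lemma v13_11 (a0 a1 a2 a3 a4 a5 a6 a7 a8 a9 a10 a11 a12 : ℝ) : ![a0, a1, a2, a3, a4, a5, a6, a7, a8, a9, a10, a11, a12] 11 = a11 := rfl
lemma v13_12 (a0 a1 a2 a3 a4 a5 a6 a7 a8 a9 a10 a11 a12 : ℝ) : ![a0, a1, a2, a3, a4, a5, a6, a7, a8, a9, a10, a11, a12] 12 = a12 := rfl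

noncomputable def Ffn (c : ℝ → ℝ) (A : Mat4) : ℝ → Mat4 := fun t => NormedSpace.exp (c t • A)
noncomputable def Gfn (c : ℝ → ℝ) (A : Mat4) : ℝ → Mat4 :=
  fun t => deriv c t • (A * NormedSpace.exp (c t • A))
noncomputable def Pmul (p q : ℝ → Mat4) : ℝ → Mat4 := fun t => p t * q t
noncomputable def mulD (dp q p dq : ℝ → Mat4) : ℝ → Mat4 := fun t => dp t * q t + p t * dq t

section

attribute [local instance] Matrix.linftyOpSemiNormedRing Matrix.linftyOpNormedRing
  Matrix.linftyOpNormedAlgebra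

lemma hasDerivAt_expM (A : Mat4) {c : ℝ → ℝ} {c' : ℝ} {t : ℝ} (hc : HasDerivAt c c' t) :
    HasDerivAt (fun s => NormedSpace.exp (c s • A)) (c' • (A * NormedSpace.exp (c t • A))) t := by
  have h : HasDerivAt (fun u : ℝ => NormedSpace.exp (u • A))
      (A * NormedSpace.exp (c t • A)) (c t) := hasDerivAt_exp_smul_const' A (c t)
  exact h.scomp t hc

lemma hasDerivAt_Ffn {c : ℝ → ℝ} (hc : ContDiff ℝ (⊤ : ℕ∞) c) (A : Mat4) (t : ℝ) :
    HasDerivAt (Ffn c A) (Gfn c A t) t :=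
  hasDerivAt_expM A ((hc.differentiable (by simp) t).hasDerivAt)

lemma hasDerivAt_Gfn {c : ℝ → ℝ} (hc : ContDiff ℝ (⊤ : ℕ∞) c) (A : Mat4) :
    HasDerivAt (Gfn c A)
      (deriv c 0 • (A * Gfn c A 0) + deriv (deriv c) 0 • (A * Ffn c A 0)) 0 := by
  have hc' : ContDiff ℝ ((⊤ : ℕ∞) : WithTop ℕ∞) c := hc.of_le (by simp)
  have h1 : HasDerivAt (deriv c) (deriv (deriv c) 0) 0 :=
    (((contDiff_infty_iff_deriv.1 hc').2).differentiable (by simp) 0).hasDerivAt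
  have h2 : HasDerivAt (fun s => A * NormedSpace.exp (c s • A)) (A * Gfn c A 0) 0 :=
    HasDerivAt.const_mul A (hasDerivAt_expM A ((hc.differentiable (by simp) 0).hasDerivAt))
  exact h1.smul h2

lemma hasDerivAt_Pmul {p q dp dq : ℝ → Mat4} (hp : ∀ t, HasDerivAt p (dp t) t)
    (hq : ∀ t, HasDerivAt q (dq t) t) (t : ℝ) :
    HasDerivAt (Pmul p q) (mulD dp q p dq t) t := (hp t).mul (hq t)

lemma hasDerivAt_mulD {p q dp dq : ℝ → Mat4} {dp' dq' : Mat4} (hp : HasDerivAt p (dp 0) 0)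
    (hq : HasDerivAt q (dq 0) 0) (hdp : HasDerivAt dp dp' 0) (hdq : HasDerivAt dq dq' 0) :
    HasDerivAt (mulD dp q p dq) (dp' * q 0 + dp 0 * dq 0 + (dp 0 * dq 0 + p 0 * dq')) 0 :=
  (hdp.mul hq).add (hp.mul hdq)

set_option maxHeartbeats 2000000

/-- Every smooth curve through the singular configuration `q₀ = 0` lying in the
configuration space `V = {q : f₁ q = 1 ∧ f₂ q = 1}` of the two-loop 6-bar linkage has
its tangent vector in the union of the 1-dimensional subspace
`{(s, 0, −s, s, 0, 0, 0, −s, 0, −s, 0, 0, 0)}` and the 2-dimensional subspace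
`{(s, t, 0, 0, 0, −s, −t, 0, 0, 0, 0, −s, −t)}` (the kinematic tangent cone at `q₀`). -/
theorem tangentCone_6bar (γ : ℝ → (Fin 13 → ℝ)) (hγ : ContDiff ℝ (⊤ : ℕ∞) γ) (h0 : γ 0 = 0)
    (hV : ∃ ε > 0, ∀ t ∈ Set.Ioo (-ε) ε, f1 (γ t) = 1 ∧ f2 (γ t) = 1) :
    (∃ s : ℝ, deriv γ 0 = ![s, 0, -s, s, 0, 0, 0, -s, 0, -s, 0, 0, 0]) ∨
      (∃ s t : ℝ, deriv γ 0 = ![s, t, 0, 0, 0, -s, -t, 0, 0, 0, 0, -s, -t]) := by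
  obtain ⟨ε, hε, hVe⟩ := hV
  have hcd : ∀ i : Fin 13, ContDiff ℝ (⊤ : ℕ∞) fun t => γ t i := fun i => contDiff_pi.1 hγ i
  have hder : ∀ i : Fin 13, deriv (fun t => γ t i) 0 = deriv γ 0 i := fun i =>
    (hasDerivAt_pi.1 ((hγ.differentiable (by simp) 0).hasDerivAt) i).deriv
  -- loop 1, first order
  have hone1 : HasDerivAt (fun t => f1 (γ t)) 0 0 := by
    have hev : (fun t => f1 (γ t)) =ᶠ[nhds 0] fun _ => (1 : Mat4) := by
      filter_upwards [Ioo_mem_nhds (neg_lt_zero.2 hε) hε] with t ht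
      exact (hVe t ht).1
    exact (hasDerivAt_const 0 (1 : Mat4)).congr_of_eventuallyEq hev
  have l1 := ((((((((hasDerivAt_Ffn (hcd 0) (Mscrew Z1) 0).mul
    (hasDerivAt_Ffn (hcd 1) (Mscrew Z2) 0)).mul
    (hasDerivAt_Ffn (hcd 2) (Mscrew Z3) 0)).mul
    (hasDerivAt_Ffn (hcd 3) (Mscrew Z4) 0)).mul
    (hasDerivAt_Ffn (hcd 4) (Mscrew Z5) 0)).mul
    (hasDerivAt_Ffn (hcd 5) (Mscrew Z6) 0)).mul
    (hasDerivAt_Ffn (hcd 6) (Mscrew Z7) 0)).mul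
    (hasDerivAt_Ffn (hcd 7) (Mscrew Z8) 0)).mul
    (hasDerivAt_Ffn (hcd 8) (Mscrew Z9) 0)
  have key1 := l1.unique hone1
  simp only [Ffn, Gfn, Pi.mul_apply, h0, Pi.zero_apply, zero_smul, NormedSpace.exp_zero, mul_one, one_mul,
    hder] at key1
  have e21 := congrFun (congrFun key1 2) 1
  have e02 := congrFun (congrFun key1 0) 2
  have e10 := congrFun (congrFun key1 1) 0
  have e03 := congrFun (congrFun key1 0) 3
  have e13 := congrFun (congrFun key1 1) 3
  have e23 := congrFun (congrFun key1 2) 3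
  simp [Mscrew, Z1, Z2, Z3, Z4, Z5, Z6, Z7, Z8, Z9, Matrix.add_apply, Matrix.smul_apply,
    Matrix.cons_val_succ, Matrix.vecHead, Matrix.vecTail, vec6_four, vec6_five]
    at e21 e02 e10 e03 e13 e23
  clear l1 key1
  -- loop 2
  have hdern : ∀ i : Fin 13, deriv (fun t => -γ t i) 0 = -deriv γ 0 i := fun i => by
    rw [deriv.fun_neg, hder i]
  set F0 := Ffn (fun t => γ t 9) (Mscrew Z10) with eF0
  set G0 := Gfn (fun t => γ t 9) (Mscrew Z10) with eG0
  set F1 := Ffn (fun t => γ t 10) (Mscrew Z11) with eF1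
  set G1 := Gfn (fun t => γ t 10) (Mscrew Z11) with eG1
  set F2 := Ffn (fun t => γ t 11) (Mscrew Z12) with eF2
  set G2 := Gfn (fun t => γ t 11) (Mscrew Z12) with eG2
  set F3 := Ffn (fun t => γ t 12) (Mscrew Z13) with eF3
  set G3 := Gfn (fun t => γ t 12) (Mscrew Z13) with eG3
  set F4 := Ffn (fun t => -γ t 8) (Mscrew Z9) with eF4
  set G4 := Gfn (fun t => -γ t 8) (Mscrew Z9) with eG4
  set F5 := Ffn (fun t => -γ t 7) (Mscrew Z8) with eF5
  set G5 := Gfn (fun t => -γ t 7) (Mscrew Z8) with eG5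
  set F6 := Ffn (fun t => -γ t 6) (Mscrew Z7) with eF6
  set G6 := Gfn (fun t => -γ t 6) (Mscrew Z7) with eG6
  set F7 := Ffn (fun t => -γ t 5) (Mscrew Z6) with eF7
  set G7 := Gfn (fun t => -γ t 5) (Mscrew Z6) with eG7
  have hF0 : ∀ t, HasDerivAt F0 (G0 t) t := fun t => hasDerivAt_Ffn (hcd 9) _ t
  have hF1 : ∀ t, HasDerivAt F1 (G1 t) t := fun t => hasDerivAt_Ffn (hcd 10) _ t
  have hF2 : ∀ t, HasDerivAt F2 (G2 t) t := fun t => hasDerivAt_Ffn (hcd 11) _ t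
  have hF3 : ∀ t, HasDerivAt F3 (G3 t) t := fun t => hasDerivAt_Ffn (hcd 12) _ t
  have hF4 : ∀ t, HasDerivAt F4 (G4 t) t := fun t => hasDerivAt_Ffn (hcd 8).neg _ t
  have hF5 : ∀ t, HasDerivAt F5 (G5 t) t := fun t => hasDerivAt_Ffn (hcd 7).neg _ t
  have hF6 : ∀ t, HasDerivAt F6 (G6 t) t := fun t => hasDerivAt_Ffn (hcd 6).neg _ t
  have hF7 : ∀ t, HasDerivAt F7 (G7 t) t := fun t => hasDerivAt_Ffn (hcd 5).neg _ t
  set P1 := Pmul F0 F1 with eP1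
  set D1 := mulD G0 F1 F0 G1 with eD1
  have hP1 : ∀ t, HasDerivAt P1 (D1 t) t := fun t => hasDerivAt_Pmul hF0 hF1 t
  set P2 := Pmul P1 F2 with eP2
  set D2 := mulD D1 F2 P1 G2 with eD2
  have hP2 : ∀ t, HasDerivAt P2 (D2 t) t := fun t => hasDerivAt_Pmul hP1 hF2 t
  set P3 := Pmul P2 F3 with eP3
  set D3 := mulD D2 F3 P2 G3 with eD3
  have hP3 : ∀ t, HasDerivAt P3 (D3 t) t := fun t => hasDerivAt_Pmul hP2 hF3 t
  set P4 := Pmul P3 F4 with eP4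
  set D4 := mulD D3 F4 P3 G4 with eD4
  have hP4 : ∀ t, HasDerivAt P4 (D4 t) t := fun t => hasDerivAt_Pmul hP3 hF4 t
  set P5 := Pmul P4 F5 with eP5
  set D5 := mulD D4 F5 P4 G5 with eD5
  have hP5 : ∀ t, HasDerivAt P5 (D5 t) t := fun t => hasDerivAt_Pmul hP4 hF5 t
  set P6 := Pmul P5 F6 with eP6
  set D6 := mulD D5 F6 P5 G6 with eD6
  have hP6 : ∀ t, HasDerivAt P6 (D6 t) t := fun t => hasDerivAt_Pmul hP5 hF6 t
  set P7 := Pmul P6 F7 with eP7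
  set D7 := mulD D6 F7 P6 G7 with eD7
  have hP7 : ∀ t, HasDerivAt P7 (D7 t) t := fun t => hasDerivAt_Pmul hP6 hF7 t
  have hD7zero : ∀ t ∈ Set.Ioo (-ε) ε, D7 t = 0 := by
    intro t ht
    have hev : P7 =ᶠ[nhds t] fun _ => (1 : Mat4) := by
      filter_upwards [Ioo_mem_nhds ht.1 ht.2] with s hs
      exact (hVe s hs).2
    exact (hP7 t).unique ((hasDerivAt_const t (1 : Mat4)).congr_of_eventuallyEq hev)
  have hG0' : HasDerivAt G0 _ 0 := hasDerivAt_Gfn (hcd 9) (Mscrew Z10)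
  have hG1' : HasDerivAt G1 _ 0 := hasDerivAt_Gfn (hcd 10) (Mscrew Z11)
  have hG2' : HasDerivAt G2 _ 0 := hasDerivAt_Gfn (hcd 11) (Mscrew Z12)
  have hG3' : HasDerivAt G3 _ 0 := hasDerivAt_Gfn (hcd 12) (Mscrew Z13)
  have hG4' : HasDerivAt G4 _ 0 := hasDerivAt_Gfn (hcd 8).neg (Mscrew Z9)
  have hG5' : HasDerivAt G5 _ 0 := hasDerivAt_Gfn (hcd 7).neg (Mscrew Z8)
  have hG6' : HasDerivAt G6 _ 0 := hasDerivAt_Gfn (hcd 6).neg (Mscrew Z7)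
  have hG7' : HasDerivAt G7 _ 0 := hasDerivAt_Gfn (hcd 5).neg (Mscrew Z6)
  have hE1 : HasDerivAt D1 _ 0 := hasDerivAt_mulD (hF0 0) (hF1 0) hG0' hG1'
  have hE2 : HasDerivAt D2 _ 0 := hasDerivAt_mulD (hP1 0) (hF2 0) hE1 hG2'
  have hE3 : HasDerivAt D3 _ 0 := hasDerivAt_mulD (hP2 0) (hF3 0) hE2 hG3'
  have hE4 : HasDerivAt D4 _ 0 := hasDerivAt_mulD (hP3 0) (hF4 0) hE3 hG4'
  have hE5 : HasDerivAt D5 _ 0 := hasDerivAt_mulD (hP4 0) (hF5 0) hE4 hG5'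
  have hE6 : HasDerivAt D6 _ 0 := hasDerivAt_mulD (hP5 0) (hF6 0) hE5 hG6'
  have hE7 : HasDerivAt D7 _ 0 := hasDerivAt_mulD (hP6 0) (hF7 0) hE6 hG7'
  have hE70 : HasDerivAt D7 0 0 := by
    have hev : D7 =ᶠ[nhds 0] fun _ => (0 : Mat4) := by
      filter_upwards [Ioo_mem_nhds (neg_lt_zero.2 hε) hε] with s hs
      exact hD7zero s hs
    exact (hasDerivAt_const 0 (0 : Mat4)).congr_of_eventuallyEq hev
  have keyE := hE7.unique hE70
  have keyD := hD7zero 0 ⟨neg_lt_zero.2 hε, hε⟩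
  simp only [eD7, eD6, eD5, eD4, eD3, eD2, eD1, eP7, eP6, eP5, eP4, eP3, eP2, eP1,
    eF0, eF1, eF2, eF3, eF4, eF5, eF6, eF7, eG0, eG1, eG2, eG3, eG4, eG5, eG6, eG7,
    mulD, Pmul, Ffn, Gfn] at keyD keyE
  simp only [h0, Pi.zero_apply, neg_zero, zero_smul, NormedSpace.exp_zero, mul_one, one_mul,
    smul_smul, hder, hdern] at keyD keyE
  have b21 := congrFun (congrFun keyD 2) 1
  have b02 := congrFun (congrFun keyD 0) 2
  have b03 := congrFun (congrFun keyD 0) 3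
  have b13 := congrFun (congrFun keyD 1) 3
  have q10 := congrFun (congrFun keyE 1) 0
  have q23 := congrFun (congrFun keyE 2) 3
  simp [Mscrew, Z6, Z7, Z8, Z9, Z10, Z11, Z12, Z13, Matrix.add_apply, Matrix.smul_apply,
    Matrix.mul_apply, Fin.sum_univ_four, Matrix.cons_val_succ, Matrix.vecHead, Matrix.vecTail,
    vec6_four, vec6_five] at b21 b02 b03 b13 q10 q23
  by_cases h7 : deriv γ 0 7 = 0
  · refine Or.inr ⟨deriv γ 0 0, deriv γ 0 1, ?_⟩
    funext i
    fin_cases i <;>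
      (simp [v13_0, v13_1, v13_2, v13_3, v13_4, v13_5, v13_6, v13_7, v13_8, v13_9, v13_10, v13_11, v13_12]; try linarith [e21, e02, e10, e03, e13, e23, b21, b02, b03, b13, h7])
  · have h11 : deriv γ 0 11 = 0 := q10.resolve_right h7
    have h9 : deriv γ 0 9 = deriv γ 0 7 := by linarith [b02]
    rw [h9, h11] at q23
    ring_nf at q23
    have h12 : deriv γ 0 12 = 0 := by
      rcases mul_eq_zero.mp (show deriv γ 0 7 * deriv γ 0 12 = 0 from by linarith) with h | h
      · exact absurd h h7
      · exact h
    refine Or.inl ⟨deriv γ 0 0, ?_⟩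
    funext i
    fin_cases i <;>
      (simp [v13_0, v13_1, v13_2, v13_3, v13_4, v13_5, v13_6, v13_7, v13_8, v13_9, v13_10, v13_11, v13_12];
        try linarith [e21, e02, e10, e03, e13, e23, b21, b02, b03, b13, h9, h11, h12])
end
end

section
/- Let f₁, f₂ : ℝ¹³ → Matrix (Fin 4) (Fin 4) ℝ be f₁(q) = exp(q₁ M(Z₁)) · exp(q₂ M(Z₂)) · exp(q₃ M(Z₃)) · exp(q₄ M(Z₄)) · exp(q₅ M(Z₅)) · exp(q₆ M(Z₆)) · exp(q₇ M(Z₇)) · exp(q₈ M(Z₈)) · exp(q₉ M(Z₉)) and f₂(q) = exp(q₁₀ M(Z₁₀)) · exp(q₁₁ M(Z₁₁)) · exp(q₁₂ M(Z₁₂)) · exp(q₁₃ M(Z₁₃)) · exp(−q₉ M(Z₉)) · exp(−q₈ M(Z₈)) · exp(−q₇ M(Z₇)) · exp(−q₆ M(Z₆)), and let V = {q ∈ ℝ¹³ : f₁(q) = 1 and f₂(q) = 1}. There exists a C^∞ curve γ : ℝ → ℝ¹³ with γ(0) = 0, γ(t) ∈ V for all t in some open interval around 0, and γ'(0) = (1,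 0, −1, 1, 0, 0, 0, −1, 0, −1, 0, 0, 0); i.e. the 1-DOF motion mode of the linkage through the singular configuration q₀ = 0 exists as a finite motion. -/
namespace SixBarAux

open Real

/-- Exponential of a scaled 2-nilpotent matrix. -/
lemma exp_nil (A : Matrix (Fin 4) (Fin 4) ℝ) (h : A * A = 0) (a : ℝ) :
    NormedSpace.exp (a • A) = 1 + a • A := by
  have hsq : (a • A) * (a • A) = 0 := by
    rw [smul_mul_assoc, mul_smul_comm, h, smul_zero, smul_zero]
  rw [NormedSpace.exp_eq_tsum ℝ]
  beta_reduce
  rw [tsum_eq_sum (s := Finset.range 2) ?_]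
  · norm_num [Finset.sum_range_succ]
  · intro n hn
    rw [Finset.mem_range, not_lt] at hn
    obtain ⟨m, rfl⟩ := Nat.exists_eq_add_of_le hn
    rw [pow_add, pow_two, hsq, zero_mul, smul_zero]

section NormedInstances

attribute [local instance] Matrix.linftyOpNormedRing Matrix.linftyOpNormedAlgebra

/-- Exponential of a scaled rotation-type screw matrix. -/
lemma exp_rot (A : Matrix (Fin 4) (Fin 4) ℝ) (h3 : A * A * A = -A) (t : ℝ) :
    NormedSpace.exp (t • A) = 1 + Real.sin t • A + (1 - Real.cos t) • (A * A) := by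
  set v : ℝ → Matrix (Fin 4) (Fin 4) ℝ :=
    fun u => 1 + Real.sin u • A + (1 - Real.cos u) • (A * A) with hv
  have key : ∀ u : ℝ, v u * NormedSpace.exp (u • (-A)) = 1 := by
    have hder : ∀ u : ℝ, HasDerivAt (fun w => v w * NormedSpace.exp (w • (-A))) 0 u := by
      intro u
      have h1 : HasDerivAt v (Real.cos u • A + Real.sin u • (A * A)) u := by
        have hs := (Real.hasDerivAt_sin u).smul_const A
        have hc := ((Real.hasDerivAt_cos u).const_sub 1).smul_const (A * A)
        have h0 := ((hasDerivAt_const u (1 : Matrix (Fin 4) (Fin 4) ℝ)).add hs).add hc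
        rw [hv]; exact h0.congr_deriv (by simp)
      have h2 : HasDerivAt (fun w : ℝ => NormedSpace.exp (w • (-A)))
          (NormedSpace.exp (u • (-A)) * (-A)) u := hasDerivAt_exp_smul_const (-A) u
      have h12 := h1.mul h2
      refine h12.congr_deriv ?_
      have hcomm : Commute (-A) (NormedSpace.exp (u • (-A))) :=
        ((Commute.refl (-A)).smul_right u).exp_right
      rw [← hcomm.eq, ← mul_assoc, ← add_mul]
      have hbr : Real.cos u • A + Real.sin u • (A * A) + v u * (-A) = 0 := by
        rw [hv]
        simp only [add_mul, one_mul, smul_mul_assoc, mul_neg, h3, neg_neg]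
        module
      rw [hbr, zero_mul]
    have hconst := is_const_of_deriv_eq_zero
      (f := fun w => v w * NormedSpace.exp (w • (-A)))
      (fun u => (hder u).differentiableAt) (fun u => (hder u).deriv)
    intro u
    have h0 : v 0 * NormedSpace.exp ((0 : ℝ) • (-A)) = 1 := by
      simp [hv]
    calc v u * NormedSpace.exp (u • (-A))
        = v 0 * NormedSpace.exp ((0 : ℝ) • (-A)) := hconst u 0
      _ = 1 := h0
  have hcancel : NormedSpace.exp (t • (-A)) * NormedSpace.exp (t • A) = 1 := by
    erw [← NormedSpace.exp_add_of_commute (((Commute.refl A).neg_left.smul_left t).smul_right t)]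
    rw [smul_neg, neg_add_cancel, NormedSpace.exp_zero]
  calc NormedSpace.exp (t • A) = 1 * NormedSpace.exp (t • A) := (one_mul _).symm
    _ = v t * NormedSpace.exp (t • (-A)) * NormedSpace.exp (t • A) := by rw [key t]
    _ = v t * (NormedSpace.exp (t • (-A)) * NormedSpace.exp (t • A)) := mul_assoc _ _ _
    _ = v t := by rw [hcancel, mul_one]

lemma exp_cancel (A : Matrix (Fin 4) (Fin 4) ℝ) (a : ℝ) :
    NormedSpace.exp (a • A) * NormedSpace.exp ((-a) • A) = 1 := by
  erw [← NormedSpace.exp_add_of_commute (((Commute.refl A).smul_left a).smul_right (-a))]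
  rw [← add_smul, add_neg_cancel, zero_smul, NormedSpace.exp_zero]

end NormedInstances

end SixBarAux

section ExpFormulas

open Real SixBarAux

lemma one4 : (1 : Matrix (Fin 4) (Fin 4) ℝ) = !![1, 0, 0, 0; 0, 1, 0, 0; 0, 0, 1, 0; 0, 0, 0, 1] := by
  ext i j
  fin_cases i <;> fin_cases j <;>
    norm_num [Matrix.one_apply, Fin.ext_iff, Matrix.vecHead, Matrix.vecTail, Function.comp_apply]

lemma MZ1 : Mscrew Z1 = !![0, 0, 0, 0; 0, 0, -1, 0; 0, 1, 0, 0; (0:ℝ), 0, 0, 0] := by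
  ext i j
  rw [Mscrew]
  fin_cases i <;> fin_cases j <;>
    norm_num [show Z1 0 = (1:ℝ) from rfl, show Z1 1 = (0:ℝ) from rfl, show Z1 2 = (0:ℝ) from rfl, show Z1 3 = (0:ℝ) from rfl, show Z1 4 = (0:ℝ) from rfl, show Z1 5 = (0:ℝ) from rfl, Matrix.vecHead, Matrix.vecTail, Function.comp_apply]

lemma MZ2 : Mscrew Z2 = !![0, 0, 0, 1; 0, 0, 0, 0; 0, 0, 0, 0; (0:ℝ), 0, 0, 0] := by
  ext i j
  rw [Mscrew]
  fin_cases i <;> fin_cases j <;>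
    norm_num [show Z2 0 = (0:ℝ) from rfl, show Z2 1 = (0:ℝ) from rfl, show Z2 2 = (0:ℝ) from rfl, show Z2 3 = (1:ℝ) from rfl, show Z2 4 = (0:ℝ) from rfl, show Z2 5 = (0:ℝ) from rfl, Matrix.vecHead, Matrix.vecTail, Function.comp_apply]

lemma MZ3 : Mscrew Z3 = !![0, 0, 0, 0; 0, 0, -1, 0; 0, 1, 0, -1; (0:ℝ), 0, 0, 0] := by
  ext i j
  rw [Mscrew]
  fin_cases i <;> fin_cases j <;>
    norm_num [show Z3 0 = (1:ℝ) from rfl, show Z3 1 = (0:ℝ) from rfl, show Z3 2 = (0:ℝ) from rfl, show Z3 3 = (0:ℝ) from rfl, show Z3 4 = (0:ℝ) from rfl, show Z3 5 = (-1:ℝ) from rfl, Matrix.vecHead, Matrix.vecTail, Function.comp_apply]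

lemma MZ4 : Mscrew Z4 = !![0, 0, 1, 0; 0, 0, 0, 0; -1, 0, 0, -1; (0:ℝ), 0, 0, 0] := by
  ext i j
  rw [Mscrew]
  fin_cases i <;> fin_cases j <;>
    norm_num [show Z4 0 = (0:ℝ) from rfl, show Z4 1 = (1:ℝ) from rfl, show Z4 2 = (0:ℝ) from rfl, show Z4 3 = (0:ℝ) from rfl, show Z4 4 = (0:ℝ) from rfl, show Z4 5 = (-1:ℝ) from rfl, Matrix.vecHead, Matrix.vecTail, Function.comp_apply]

lemma MZ8 : Mscrew Z8 = !![0, 0, 1, 0; 0, 0, 0, 0; -1, 0, 0, 0; (0:ℝ), 0, 0, 0] := by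
  ext i j
  rw [Mscrew]
  fin_cases i <;> fin_cases j <;>
    norm_num [show Z8 0 = (0:ℝ) from rfl, show Z8 1 = (1:ℝ) from rfl, show Z8 2 = (0:ℝ) from rfl, show Z8 3 = (0:ℝ) from rfl, show Z8 4 = (0:ℝ) from rfl, show Z8 5 = (0:ℝ) from rfl, Matrix.vecHead, Matrix.vecTail, Function.comp_apply]

lemma MZ9 : Mscrew Z9 = !![0, 0, 0, 0; 0, 0, 0, 1; 0, 0, 0, 0; (0:ℝ), 0, 0, 0] := by
  ext i j
  rw [Mscrew]
  fin_cases i <;> fin_cases j <;>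
    norm_num [show Z9 0 = (0:ℝ) from rfl, show Z9 1 = (0:ℝ) from rfl, show Z9 2 = (0:ℝ) from rfl, show Z9 3 = (0:ℝ) from rfl, show Z9 4 = (1:ℝ) from rfl, show Z9 5 = (0:ℝ) from rfl, Matrix.vecHead, Matrix.vecTail, Function.comp_apply]

lemma expZ1 (u : ℝ) : NormedSpace.exp (u • Mscrew Z1) = !![1, 0, 0, 0; 0, cos u, -sin u, 0; 0, sin u, cos u, 0; 0, 0, 0, 1] := by
  have hsq : !![0, 0, 0, 0; 0, 0, -1, 0; 0, 1, 0, 0; (0:ℝ), 0, 0, 0] * !![0, 0, 0, 0; 0, 0, -1, 0; 0, 1, 0, 0; (0:ℝ), 0, 0, 0] = !![0, 0, 0, 0; 0, -1, 0, 0; 0, 0, -1, 0; (0:ℝ), 0, 0, 0] := by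
    ext i j
    fin_cases i <;> fin_cases j <;>
      norm_num [Matrix.mul_apply, Fin.sum_univ_four, Matrix.vecHead, Matrix.vecTail, Matrix.cons_val_two, Matrix.cons_val_three, Function.comp_apply]
  rw [MZ1, exp_rot _ (by
      rw [hsq]
      ext i j
      fin_cases i <;> fin_cases j <;>
        norm_num [Matrix.mul_apply, Fin.sum_univ_four, Matrix.vecHead, Matrix.vecTail, Matrix.cons_val_two, Matrix.cons_val_three, Function.comp_apply]) u, hsq, one4]
  ext i j
  fin_cases i <;> fin_cases j <;>
    norm_num [Fin.ext_iff, Matrix.vecHead, Matrix.vecTail, Matrix.cons_val_two, Matrix.cons_val_three, Function.comp_apply]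

lemma expZ2 (u : ℝ) : NormedSpace.exp (u • Mscrew Z2) = !![1, 0, 0, u; 0, 1, 0, 0; 0, 0, 1, 0; 0, 0, 0, 1] := by
  rw [MZ2, exp_nil _ (by ext i j; fin_cases i <;> fin_cases j <;>
    norm_num [Matrix.mul_apply, Fin.sum_univ_four, Matrix.vecHead, Matrix.vecTail, Matrix.cons_val_two, Matrix.cons_val_three, Function.comp_apply]) u]
  ext i j
  fin_cases i <;> fin_cases j <;>
    norm_num [Matrix.one_apply, Fin.ext_iff, Matrix.vecHead, Matrix.vecTail, Matrix.cons_val_two, Matrix.cons_val_three, Function.comp_apply]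

lemma expZ3 (u : ℝ) : NormedSpace.exp (u • Mscrew Z3) = !![1, 0, 0, 0; 0, cos u, -sin u, 1 - cos u; 0, sin u, cos u, -sin u; 0, 0, 0, 1] := by
  have hsq : !![0, 0, 0, 0; 0, 0, -1, 0; 0, 1, 0, -1; (0:ℝ), 0, 0, 0] * !![0, 0, 0, 0; 0, 0, -1, 0; 0, 1, 0, -1; (0:ℝ), 0, 0, 0] = !![0, 0, 0, 0; 0, -1, 0, 1; 0, 0, -1, 0; (0:ℝ), 0, 0, 0] := by
    ext i j
    fin_cases i <;> fin_cases j <;>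
      norm_num [Matrix.mul_apply, Fin.sum_univ_four, Matrix.vecHead, Matrix.vecTail, Matrix.cons_val_two, Matrix.cons_val_three, Function.comp_apply]
  rw [MZ3, exp_rot _ (by
      rw [hsq]
      ext i j
      fin_cases i <;> fin_cases j <;>
        norm_num [Matrix.mul_apply, Fin.sum_univ_four, Matrix.vecHead, Matrix.vecTail, Matrix.cons_val_two, Matrix.cons_val_three, Function.comp_apply]) u, hsq, one4]
  ext i j
  fin_cases i <;> fin_cases j <;>
    norm_num [Fin.ext_iff, Matrix.vecHead, Matrix.vecTail, Matrix.cons_val_two, Matrix.cons_val_three, Function.comp_apply]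

lemma expZ4 (u : ℝ) : NormedSpace.exp (u • Mscrew Z4) = !![cos u, 0, sin u, cos u - 1; 0, 1, 0, 0; -sin u, 0, cos u, -sin u; 0, 0, 0, 1] := by
  have hsq : !![0, 0, 1, 0; 0, 0, 0, 0; -1, 0, 0, -1; (0:ℝ), 0, 0, 0] * !![0, 0, 1, 0; 0, 0, 0, 0; -1, 0, 0, -1; (0:ℝ), 0, 0, 0] = !![-1, 0, 0, -1; 0, 0, 0, 0; 0, 0, -1, 0; (0:ℝ), 0, 0, 0] := by
    ext i j
    fin_cases i <;> fin_cases j <;>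
      norm_num [Matrix.mul_apply, Fin.sum_univ_four, Matrix.vecHead, Matrix.vecTail, Matrix.cons_val_two, Matrix.cons_val_three, Function.comp_apply]
  rw [MZ4, exp_rot _ (by
      rw [hsq]
      ext i j
      fin_cases i <;> fin_cases j <;>
        norm_num [Matrix.mul_apply, Fin.sum_univ_four, Matrix.vecHead, Matrix.vecTail, Matrix.cons_val_two, Matrix.cons_val_three, Function.comp_apply]) u, hsq, one4]
  ext i j
  fin_cases i <;> fin_cases j <;>
    norm_num [Fin.ext_iff, Matrix.vecHead, Matrix.vecTail, Matrix.cons_val_two, Matrix.cons_val_three, Function.comp_apply]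

lemma expZ8 (u : ℝ) : NormedSpace.exp (u • Mscrew Z8) = !![cos u, 0, sin u, 0; 0, 1, 0, 0; -sin u, 0, cos u, 0; 0, 0, 0, 1] := by
  have hsq : !![0, 0, 1, 0; 0, 0, 0, 0; -1, 0, 0, 0; (0:ℝ), 0, 0, 0] * !![0, 0, 1, 0; 0, 0, 0, 0; -1, 0, 0, 0; (0:ℝ), 0, 0, 0] = !![-1, 0, 0, 0; 0, 0, 0, 0; 0, 0, -1, 0; (0:ℝ), 0, 0, 0] := by
    ext i j
    fin_cases i <;> fin_cases j <;>
      norm_num [Matrix.mul_apply, Fin.sum_univ_four, Matrix.vecHead, Matrix.vecTail, Matrix.cons_val_two, Matrix.cons_val_three, Function.comp_apply]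
  rw [MZ8, exp_rot _ (by
      rw [hsq]
      ext i j
      fin_cases i <;> fin_cases j <;>
        norm_num [Matrix.mul_apply, Fin.sum_univ_four, Matrix.vecHead, Matrix.vecTail, Matrix.cons_val_two, Matrix.cons_val_three, Function.comp_apply]) u, hsq, one4]
  ext i j
  fin_cases i <;> fin_cases j <;>
    norm_num [Fin.ext_iff, Matrix.vecHead, Matrix.vecTail, Matrix.cons_val_two, Matrix.cons_val_three, Function.comp_apply]

lemma expZ9 (u : ℝ) : NormedSpace.exp (u • Mscrew Z9) = !![1, 0, 0, 0; 0, 1, 0, u; 0, 0, 1, 0; 0, 0, 0, 1] := by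
  rw [MZ9, exp_nil _ (by ext i j; fin_cases i <;> fin_cases j <;>
    norm_num [Matrix.mul_apply, Fin.sum_univ_four, Matrix.vecHead, Matrix.vecTail, Matrix.cons_val_two, Matrix.cons_val_three, Function.comp_apply]) u]
  ext i j
  fin_cases i <;> fin_cases j <;>
    norm_num [Matrix.one_apply, Fin.ext_iff, Matrix.vecHead, Matrix.vecTail, Matrix.cons_val_two, Matrix.cons_val_three, Function.comp_apply]

/-- The product of the six nontrivial factors of `f1` along the motion curve is `1`. -/
lemma prod_f1 (s c : ℝ) (h : s ^ 2 + c ^ 2 = 1) :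
    !![1, 0, 0, 0; 0, c, -s, 0; 0, s, c, 0; (0:ℝ), 0, 0, 1] *
    !![1, 0, 0, 1 - c; 0, 1, 0, 0; 0, 0, 1, 0; 0, 0, 0, 1] *
    !![1, 0, 0, 0; 0, c, s, 1 - c; 0, -s, c, s; 0, 0, 0, 1] *
    !![c, 0, s, c - 1; 0, 1, 0, 0; -s, 0, c, -s; 0, 0, 0, 1] *
    !![c, 0, -s, 0; 0, 1, 0, 0; s, 0, c, 0; 0, 0, 0, 1] *
    !![1, 0, 0, 0; 0, 1, 0, 1 - c; 0, 0, 1, 0; 0, 0, 0, 1] = 1 := by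
  have h1 : !![1, 0, 0, 0; 0, c, -s, 0; 0, s, c, 0; (0:ℝ), 0, 0, 1] *
      !![1, 0, 0, 1 - c; 0, 1, 0, 0; 0, 0, 1, 0; 0, 0, 0, 1] =
      !![1, 0, 0, 1 - c; 0, c, -s, 0; 0, s, c, 0; 0, 0, 0, 1] := by
    ext i j
    fin_cases i <;> fin_cases j <;>
      simp [Matrix.mul_apply, Fin.sum_univ_four, Matrix.vecHead, Matrix.vecTail, Function.comp] <;> ring
  have h2 : !![1, 0, 0, 1 - c; 0, c, -s, 0; 0, s, c, 0; (0:ℝ), 0, 0, 1] *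
      !![1, 0, 0, 0; 0, c, s, 1 - c; 0, -s, c, s; 0, 0, 0, 1] =
      !![1, 0, 0, 1 - c; 0, 1, 0, c - 1; 0, 0, 1, s; 0, 0, 0, 1] := by
    ext i j
    fin_cases i <;> fin_cases j <;>
      simp [Matrix.mul_apply, Fin.sum_univ_four, Matrix.vecHead, Matrix.vecTail, Function.comp] <;>
      first
        | ring1
        | linear_combination h
        | linear_combination -h
  have h3 : !![1, 0, 0, 1 - c; 0, 1, 0, c - 1; 0, 0, 1, s; (0:ℝ), 0, 0, 1] *
      !![c, 0, s, c - 1; 0, 1, 0, 0; -s, 0, c, -s; 0, 0, 0, 1] =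
      !![c, 0, s, 0; 0, 1, 0, c - 1; -s, 0, c, 0; 0, 0, 0, 1] := by
    ext i j
    fin_cases i <;> fin_cases j <;>
      simp [Matrix.mul_apply, Fin.sum_univ_four, Matrix.vecHead, Matrix.vecTail, Function.comp] <;>
      first
        | ring1
        | linear_combination h
        | linear_combination -h
  have h4 : !![c, 0, s, 0; 0, 1, 0, c - 1; -s, 0, c, 0; (0:ℝ), 0, 0, 1] *
      !![c, 0, -s, 0; 0, 1, 0, 0; s, 0, c, 0; 0, 0, 0, 1] =
      !![1, 0, 0, 0; 0, 1, 0, c - 1; 0, 0, 1, 0; 0, 0, 0, 1] := by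
    ext i j
    fin_cases i <;> fin_cases j <;>
      simp [Matrix.mul_apply, Fin.sum_univ_four, Matrix.vecHead, Matrix.vecTail, Function.comp] <;>
      first
        | ring1
        | linear_combination h
        | linear_combination -h
  have h5 : !![1, 0, 0, 0; 0, 1, 0, c - 1; 0, 0, 1, 0; (0:ℝ), 0, 0, 1] *
      !![1, 0, 0, 0; 0, 1, 0, 1 - c; 0, 0, 1, 0; 0, 0, 0, 1] = 1 := by
    rw [one4]
    ext i j
    fin_cases i <;> fin_cases j <;>
      norm_num [Matrix.mul_apply, Fin.sum_univ_four, Matrix.vecHead, Matrix.vecTail, Matrix.cons_val_two, Matrix.cons_val_three, Function.comp_apply]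
  rw [h1, h2, h3, h4, h5]

end ExpFormulas


/-- The 1-DOF motion mode of the two-loop 6-bar linkage through the singular
configuration `q₀ = 0` exists as a finite motion: there is a smooth curve in the
configuration space through `0` with tangent `(1, 0, −1, 1, 0, 0, 0, −1, 0, −1, 0, 0, 0)`. -/
theorem oneDofBranch_6bar :
    ∃ γ : ℝ → (Fin 13 → ℝ), ContDiff ℝ (⊤ : ℕ∞) γ ∧ γ 0 = 0 ∧
      (∃ ε > 0, ∀ t ∈ Set.Ioo (-ε) ε, f1 (γ t) = 1 ∧ f2 (γ t) = 1) ∧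
      deriv γ 0 = ![1, 0, -1, 1, 0, 0, 0, -1, 0, -1, 0, 0, 0] := by
  classical
  refine ⟨fun t => ![t, 1 - Real.cos t, -t, t, 0, 0, 0, -t, 1 - Real.cos t,
      -t, 1 - Real.cos t, 0, 0], ?_, ?_, ?_, ?_⟩
  · rw [contDiff_pi]
    intro i
    fin_cases i <;>
      simp only [Matrix.cons_val_zero, Matrix.cons_val_one, Matrix.head_cons,
        Matrix.cons_val_succ] <;>
      first
        | exact contDiff_id
        | exact contDiff_const.sub Real.contDiff_cos
        | exact contDiff_id.neg
        | exact contDiff_const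
  · funext i
    fin_cases i <;> norm_num
  · refine ⟨1, one_pos, fun t _ => ⟨?_, ?_⟩⟩
    · show f1 (![t, 1 - Real.cos t, -t, t, 0, 0, 0, -t, 1 - Real.cos t,
        -t, 1 - Real.cos t, 0, 0]) = 1
      have e0 : (![t, 1 - Real.cos t, -t, t, 0, 0, 0, -t, 1 - Real.cos t,
          -t, 1 - Real.cos t, 0, 0] : Fin 13 → ℝ) 4 = 0 := rfl
      show NormedSpace.exp (t • Mscrew Z1) *
          NormedSpace.exp ((1 - Real.cos t) • Mscrew Z2) *
          NormedSpace.exp ((-t) • Mscrew Z3) *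
          NormedSpace.exp (t • Mscrew Z4) *
          NormedSpace.exp ((0 : ℝ) • Mscrew Z5) *
          NormedSpace.exp ((0 : ℝ) • Mscrew Z6) *
          NormedSpace.exp ((0 : ℝ) • Mscrew Z7) *
          NormedSpace.exp ((-t) • Mscrew Z8) *
          NormedSpace.exp ((1 - Real.cos t) • Mscrew Z9) = 1
      rw [zero_smul, zero_smul, zero_smul, NormedSpace.exp_zero, mul_one, mul_one, mul_one]
      have E3 : NormedSpace.exp ((-t) • Mscrew Z3) =
          !![1, 0, 0, 0; 0, Real.cos t, Real.sin t, 1 - Real.cos t;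
             0, -Real.sin t, Real.cos t, Real.sin t; 0, 0, 0, 1] := by
        rw [expZ3]
        ext i j
        fin_cases i <;> fin_cases j <;>
          simp [Real.sin_neg, Real.cos_neg] <;> ring
      have E8 : NormedSpace.exp ((-t) • Mscrew Z8) =
          !![Real.cos t, 0, -Real.sin t, 0; 0, 1, 0, 0;
             Real.sin t, 0, Real.cos t, 0; 0, 0, 0, 1] := by
        rw [expZ8]
        ext i j
        fin_cases i <;> fin_cases j <;>
          simp [Real.sin_neg, Real.cos_neg] <;> ring
      rw [expZ1, expZ2, E3, expZ4, E8, expZ9]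
      exact prod_f1 (Real.sin t) (Real.cos t) (Real.sin_sq_add_cos_sq t)
    · show f2 (![t, 1 - Real.cos t, -t, t, 0, 0, 0, -t, 1 - Real.cos t,
        -t, 1 - Real.cos t, 0, 0]) = 1
      show NormedSpace.exp ((-t) • Mscrew Z10) *
          NormedSpace.exp ((1 - Real.cos t) • Mscrew Z11) *
          NormedSpace.exp ((0 : ℝ) • Mscrew Z12) *
          NormedSpace.exp ((0 : ℝ) • Mscrew Z13) *
          NormedSpace.exp ((-(1 - Real.cos t)) • Mscrew Z9) *
          NormedSpace.exp ((- -t) • Mscrew Z8) *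
          NormedSpace.exp ((-(0 : ℝ)) • Mscrew Z7) *
          NormedSpace.exp ((-(0 : ℝ)) • Mscrew Z6) = 1
      have hZ9 : Mscrew Z9 = Mscrew Z11 := rfl
      have hZ8 : Mscrew Z8 = Mscrew Z10 := rfl
      rw [neg_zero, neg_neg, zero_smul, zero_smul, zero_smul, zero_smul, NormedSpace.exp_zero,
        mul_one, mul_one, mul_one, mul_one, hZ9, hZ8]
      rw [mul_assoc (NormedSpace.exp ((-t) • Mscrew Z10)),
        SixBarAux.exp_cancel (Mscrew Z11) (1 - Real.cos t), mul_one]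
      have := SixBarAux.exp_cancel (Mscrew Z10) (-t)
      rwa [neg_neg] at this
  · have hd : HasDerivAt (fun t => (![t, 1 - Real.cos t, -t, t, 0, 0, 0, -t, 1 - Real.cos t,
        -t, 1 - Real.cos t, 0, 0] : Fin 13 → ℝ))
        (![1, 0, -1, 1, 0, 0, 0, -1, 0, -1, 0, 0, 0] : Fin 13 → ℝ) 0 := by
      rw [hasDerivAt_pi]
      intro i
      have hcos : HasDerivAt (fun t : ℝ => 1 - Real.cos t) 0 0 := by
        simpa using (Real.hasDerivAt_cos 0).const_sub 1
      have hid : HasDerivAt (fun t : ℝ => t) 1 0 := hasDerivAt_id 0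
      have hneg : HasDerivAt (fun t : ℝ => -t) (-1) 0 := hid.neg
      fin_cases i <;>
        simp only [Matrix.cons_val_zero, Matrix.cons_val_one, Matrix.head_cons,
          Matrix.cons_val_succ] <;>
        first
          | exact hid
          | exact hcos
          | exact hneg
          | exact hasDerivAt_const 0 0
    exact hd.deriv
end

section
/- Let f₁, f₂ : ℝ¹³ → Matrix (Fin 4) (Fin 4) ℝ be f₁(q) = exp(q₁ M(Z₁)) · exp(q₂ M(Z₂)) · exp(q₃ M(Z₃)) · exp(q₄ M(Z₄)) · exp(q₅ M(Z₅)) · exp(q₆ M(Z₆)) · exp(q₇ M(Z₇)) · exp(q₈ M(Z₈)) · exp(q₉ M(Z₉)) and f₂(q) = exp(q₁₀ M(Z₁₀)) · exp(q₁₁ M(Z₁₁)) · exp(q₁₂ M(Z₁₂)) · exp(q₁₃ M(Z₁₃)) · exp(−q₉ M(Z₉)) · exp(−q₈ M(Z₈)) · exp(−q₇ M(Z₇)) · exp(−q₆ M(Z₆)), and let V = {q ∈ ℝ¹³ : f₁(q) = 1 and f₂(q) = 1}. There exist an open neighborhood U of 0 in ℝ² and a C^∞ map Φ : U → ℝ¹³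 with Φ(0) = 0, Φ(u) ∈ V for all u ∈ U, and whose differential at 0 is injective with image equal to the two-dimensional subspace {(s, t, 0, 0, 0, −s, −t, 0, 0, 0, 0, −s, −t) : s, t ∈ ℝ}; i.e. the 2-DOF motion mode of the linkage through the singular configuration q₀ = 0 exists as a finite motion. -/
namespace TwoDofAux

open NormedSpace

-- evaluation lemmas for 13-component vector literals
variable {α : Type*}

@[simp] lemma v13_0 (a₀ a₁ a₂ a₃ a₄ a₅ a₆ a₇ a₈ a₉ a₁₀ a₁₁ a₁₂ : α) :
    (![a₀,a₁,a₂,a₃,a₄,a₅,a₆,a₇,a₈,a₉,a₁₀,a₁₁,a₁₂] : Fin 13 → α) 0 = a₀ := rfl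
@[simp] lemma v13_1 (a₀ a₁ a₂ a₃ a₄ a₅ a₆ a₇ a₈ a₉ a₁₀ a₁₁ a₁₂ : α) :
    (![a₀,a₁,a₂,a₃,a₄,a₅,a₆,a₇,a₈,a₉,a₁₀,a₁₁,a₁₂] : Fin 13 → α) 1 = a₁ := rfl
@[simp] lemma v13_2 (a₀ a₁ a₂ a₃ a₄ a₅ a₆ a₇ a₈ a₉ a₁₀ a₁₁ a₁₂ : α) :
    (![a₀,a₁,a₂,a₃,a₄,a₅,a₆,a₇,a₈,a₉,a₁₀,a₁₁,a₁₂] : Fin 13 → α) 2 = a₂ := rfl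
@[simp] lemma v13_3 (a₀ a₁ a₂ a₃ a₄ a₅ a₆ a₇ a₈ a₉ a₁₀ a₁₁ a₁₂ : α) :
    (![a₀,a₁,a₂,a₃,a₄,a₅,a₆,a₇,a₈,a₉,a₁₀,a₁₁,a₁₂] : Fin 13 → α) 3 = a₃ := rfl
@[simp] lemma v13_4 (a₀ a₁ a₂ a₃ a₄ a₅ a₆ a₇ a₈ a₉ a₁₀ a₁₁ a₁₂ : α) :
    (![a₀,a₁,a₂,a₃,a₄,a₅,a₆,a₇,a₈,a₉,a₁₀,a₁₁,a₁₂] : Fin 13 → α) 4 = a₄ := rfl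
@[simp] lemma v13_5 (a₀ a₁ a₂ a₃ a₄ a₅ a₆ a₇ a₈ a₉ a₁₀ a₁₁ a₁₂ : α) :
    (![a₀,a₁,a₂,a₃,a₄,a₅,a₆,a₇,a₈,a₉,a₁₀,a₁₁,a₁₂] : Fin 13 → α) 5 = a₅ := rfl
@[simp] lemma v13_6 (a₀ a₁ a₂ a₃ a₄ a₅ a₆ a₇ a₈ a₉ a₁₀ a₁₁ a₁₂ : α) :
    (![a₀,a₁,a₂,a₃,a₄,a₅,a₆,a₇,a₈,a₉,a₁₀,a₁₁,a₁₂] : Fin 13 → α) 6 = a₆ := rfl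
@[simp] lemma v13_7 (a₀ a₁ a₂ a₃ a₄ a₅ a₆ a₇ a₈ a₉ a₁₀ a₁₁ a₁₂ : α) :
    (![a₀,a₁,a₂,a₃,a₄,a₅,a₆,a₇,a₈,a₉,a₁₀,a₁₁,a₁₂] : Fin 13 → α) 7 = a₇ := rfl
@[simp] lemma v13_8 (a₀ a₁ a₂ a₃ a₄ a₅ a₆ a₇ a₈ a₉ a₁₀ a₁₁ a₁₂ : α) :
    (![a₀,a₁,a₂,a₃,a₄,a₅,a₆,a₇,a₈,a₉,a₁₀,a₁₁,a₁₂] : Fin 13 → α) 8 = a₈ := rfl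
@[simp] lemma v13_9 (a₀ a₁ a₂ a₃ a₄ a₅ a₆ a₇ a₈ a₉ a₁₀ a₁₁ a₁₂ : α) :
    (![a₀,a₁,a₂,a₃,a₄,a₅,a₆,a₇,a₈,a₉,a₁₀,a₁₁,a₁₂] : Fin 13 → α) 9 = a₉ := rfl
@[simp] lemma v13_10 (a₀ a₁ a₂ a₃ a₄ a₅ a₆ a₇ a₈ a₉ a₁₀ a₁₁ a₁₂ : α) :
    (![a₀,a₁,a₂,a₃,a₄,a₅,a₆,a₇,a₈,a₉,a₁₀,a₁₁,a₁₂] : Fin 13 → α) 10 = a₁₀ := rfl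
@[simp] lemma v13_11 (a₀ a₁ a₂ a₃ a₄ a₅ a₆ a₇ a₈ a₉ a₁₀ a₁₁ a₁₂ : α) :
    (![a₀,a₁,a₂,a₃,a₄,a₅,a₆,a₇,a₈,a₉,a₁₀,a₁₁,a₁₂] : Fin 13 → α) 11 = a₁₁ := rfl
@[simp] lemma v13_12 (a₀ a₁ a₂ a₃ a₄ a₅ a₆ a₇ a₈ a₉ a₁₀ a₁₁ a₁₂ : α) :
    (![a₀,a₁,a₂,a₃,a₄,a₅,a₆,a₇,a₈,a₉,a₁₀,a₁₁,a₁₂] : Fin 13 → α) 12 = a₁₂ := rfl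

noncomputable def Phi (u : Fin 2 → ℝ) : Fin 13 → ℝ :=
  ![u 0, u 1, 0, 0, 0, -u 0, -u 1, 0, 0, 0, 0, -u 0, -u 1]

noncomputable def PhiL : (Fin 2 → ℝ) →ₗ[ℝ] (Fin 13 → ℝ) where
  toFun := Phi
  map_add' u v := by
    funext i
    fin_cases i <;> simp [Phi] <;> ring
  map_smul' c u := by
    funext i
    fin_cases i <;> simp [Phi]

noncomputable def PhiCLM : (Fin 2 → ℝ) →L[ℝ] (Fin 13 → ℝ) :=
  LinearMap.toContinuousLinearMap PhiL

lemma commute_smul {A B : Matrix (Fin 4) (Fin 4) ℝ} (h : A * B = B * A) (a b : ℝ) :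
    Commute (a • A) (b • B) := by
  show _ = _
  rw [smul_mul_assoc, mul_smul_comm, smul_mul_assoc, mul_smul_comm, h, smul_comm a b]

lemma exp_cancel (A : Matrix (Fin 4) (Fin 4) ℝ) (a : ℝ) :
    exp (a • A) * exp (-a • A) = 1 := by
  rw [← Matrix.exp_add_of_commute _ _ (commute_smul rfl a (-a)), ← add_smul,
    add_neg_cancel, zero_smul, exp_zero]

lemma exp_cancel' (A : Matrix (Fin 4) (Fin 4) ℝ) (a : ℝ) :
    exp (-a • A) * exp (a • A) = 1 := by
  have := exp_cancel A (-a)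
  rwa [neg_neg] at this

lemma hAB : Mscrew Z1 * Mscrew Z2 = Mscrew Z2 * Mscrew Z1 := by
  have h1 : Mscrew Z1 = !![0,0,0,0; 0,0,-1,0; 0,1,0,0; 0,0,0,0] := by
    show (!![0, -(0:ℝ), 0, 0; 0, 0, -1, 0; -0, 1, 0, 0; 0,0,0,0]) = _
    norm_num
  have h2 : Mscrew Z2 = !![0,0,0,1; 0,0,0,0; 0,0,0,0; 0,0,0,0] := by
    show (!![0, -(0:ℝ), 0, 1; 0, 0, -0, 0; -0, 0, 0, 0; 0,0,0,0]) = _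
    norm_num
  rw [h1, h2]
  ext i j
  fin_cases i <;> fin_cases j <;>
    norm_num [Matrix.mul_apply, Fin.sum_univ_succ]

lemma f1_phi (u : Fin 2 → ℝ) : f1 (Phi u) = 1 := by
  have h : f1 (Phi u) =
      exp (u 0 • Mscrew Z1) * exp (u 1 • Mscrew Z2) *
      exp ((0:ℝ) • Mscrew Z3) * exp ((0:ℝ) • Mscrew Z4) *
      exp ((0:ℝ) • Mscrew Z5) * exp (-u 0 • Mscrew Z6) *
      exp (-u 1 • Mscrew Z7) * exp ((0:ℝ) • Mscrew Z8) *
      exp ((0:ℝ) • Mscrew Z9) := rfl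
  rw [h]
  simp only [zero_smul, exp_zero, mul_one, one_mul]
  have hZ6 : Z6 = Z1 := rfl
  have hZ7 : Z7 = Z2 := rfl
  rw [hZ6, hZ7]
  have hc := commute_smul hAB.symm (u 1) (-u 0)
  have hswap : exp (u 1 • Mscrew Z2) * exp (-u 0 • Mscrew Z1) =
      exp (-u 0 • Mscrew Z1) * exp (u 1 • Mscrew Z2) := by
    rw [← Matrix.exp_add_of_commute _ _ hc, ← Matrix.exp_add_of_commute _ _ hc.symm,
      add_comm]
  rw [mul_assoc (exp (u 0 • Mscrew Z1)), hswap, ← mul_assoc,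
    exp_cancel, one_mul, exp_cancel]

lemma f2_phi (u : Fin 2 → ℝ) : f2 (Phi u) = 1 := by
  have h : f2 (Phi u) =
      exp ((0:ℝ) • Mscrew Z10) * exp ((0:ℝ) • Mscrew Z11) *
      exp (-u 0 • Mscrew Z12) * exp (-u 1 • Mscrew Z13) *
      exp ((-(0:ℝ)) • Mscrew Z9) * exp ((-(0:ℝ)) • Mscrew Z8) *
      exp ((-(-u 1)) • Mscrew Z7) * exp ((-(-u 0)) • Mscrew Z6) := rfl
  rw [h]
  simp only [zero_smul, neg_zero, neg_neg, exp_zero, mul_one, one_mul]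
  have hZ6 : Z6 = Z12 := rfl
  have hZ7 : Z7 = Z13 := rfl
  rw [hZ6, hZ7, mul_assoc (exp (-u 0 • Mscrew Z12)), exp_cancel' (Mscrew Z13), mul_one,
    exp_cancel' (Mscrew Z12)]

end TwoDofAux

/-- The 2-DOF motion mode of the two-loop 6-bar linkage through the singular
configuration `q₀ = 0` exists as a finite motion: there are an open neighborhood `U` of
`0` in `ℝ²` and a smooth map `Φ : U → ℝ¹³` into the configuration space with `Φ 0 = 0`
whose differential at `0` is injective with image the 2-dimensional subspace
`{(s, t, 0, 0, 0, −s, −t, 0, 0, 0, 0, −s, −t) : s, t ∈ ℝ}`. -/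
theorem twoDofBranch_6bar :
    ∃ (U : Set (Fin 2 → ℝ)) (Φ : (Fin 2 → ℝ) → (Fin 13 → ℝ)),
      IsOpen U ∧ (0 : Fin 2 → ℝ) ∈ U ∧ ContDiffOn ℝ (⊤ : ℕ∞) Φ U ∧ Φ 0 = 0 ∧
      (∀ u ∈ U, f1 (Φ u) = 1 ∧ f2 (Φ u) = 1) ∧
      Function.Injective (fderiv ℝ Φ 0) ∧
      Set.range (fderiv ℝ Φ 0) =
        {x : Fin 13 → ℝ | ∃ s t : ℝ,
          x = ![s, t, 0, 0, 0, -s, -t, 0, 0, 0, 0, -s, -t]} := by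
  have hfun : TwoDofAux.Phi = ⇑TwoDofAux.PhiCLM := rfl
  have hd : fderiv ℝ TwoDofAux.Phi 0 = TwoDofAux.PhiCLM := by
    rw [hfun, ContinuousLinearMap.fderiv]
  refine ⟨Set.univ, TwoDofAux.Phi, isOpen_univ, trivial, ?_, ?_, ?_, ?_, ?_⟩
  · rw [hfun]; exact TwoDofAux.PhiCLM.contDiff.contDiffOn
  · funext i
    fin_cases i <;> simp [TwoDofAux.Phi]
  · exact fun u _ => ⟨TwoDofAux.f1_phi u, TwoDofAux.f2_phi u⟩
  · rw [hd]
    intro u v h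
    have h0 : TwoDofAux.Phi u 0 = TwoDofAux.Phi v 0 := congrFun h 0
    have h1 : TwoDofAux.Phi u 1 = TwoDofAux.Phi v 1 := congrFun h 1
    simp only [TwoDofAux.Phi, TwoDofAux.v13_0, TwoDofAux.v13_1] at h0 h1
    funext i
    fin_cases i <;> assumption
  · rw [hd]
    ext x
    constructor
    · rintro ⟨u, rfl⟩
      exact ⟨u 0, u 1, rfl⟩
    · rintro ⟨s, t, rfl⟩
      exact ⟨![s, t], rfl⟩
end

section
/- For every C^∞ curve γ : ℝ → ℝ² with γ(0) = (0, 0) and γ(t) ∈ {(x, y) ∈ ℝ² : y² = x² − x⁴} for all t in some open interval around 0, the components (a, b) = γ'(0) satisfy b² = a²; that is, every tangent vector to a smooth motion in the eight-curve at the origin lies on the line y = x or on the line y = −x. -/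
open Filter Topology

/-- Every tangent vector at the origin to a smooth motion in the eight-curve
`y² = x² − x⁴` satisfies `b² = a²`, i.e. lies on the line `y = x` or the line `y = −x`. -/
theorem eightCurve_tangentCone (γ : ℝ → ℝ × ℝ) (hγ : ContDiff ℝ (⊤ : ℕ∞) γ) (h0 : γ 0 = (0, 0))
    (hV : ∃ ε > 0, ∀ t ∈ Set.Ioo (-ε) ε, (γ t).2 ^ 2 = (γ t).1 ^ 2 - (γ t).1 ^ 4) :
    (deriv γ 0).2 ^ 2 = (deriv γ 0).1 ^ 2 := by
  obtain ⟨ε, hε, hV⟩ := hV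
  have hd : HasDerivAt γ (deriv γ 0) 0 :=
    ((hγ.differentiable (by simp)) 0).hasDerivAt
  set a := (deriv γ 0).1 with ha
  set b := (deriv γ 0).2 with hb
  have hx : HasDerivAt (fun t => (γ t).1) a 0 := by
    have := (hd.hasFDerivAt.fst).hasDerivAt
    simpa using this
  have hy : HasDerivAt (fun t => (γ t).2) b 0 := by
    have := (hd.hasFDerivAt.snd).hasDerivAt
    simpa using this
  have hxs : Tendsto (fun t => (γ t).1 / t) (𝓝[≠] (0:ℝ)) (𝓝 a) := by
    have := hasDerivAt_iff_tendsto_slope.mp hx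
    simpa [slope_fun_def, h0, div_eq_inv_mul] using this
  have hys : Tendsto (fun t => (γ t).2 / t) (𝓝[≠] (0:ℝ)) (𝓝 b) := by
    have := hasDerivAt_iff_tendsto_slope.mp hy
    simpa [slope_fun_def, h0, div_eq_inv_mul] using this
  have hxc : Tendsto (fun t => (γ t).1) (𝓝[≠] (0:ℝ)) (𝓝 0) := by
    have hc : ContinuousAt (fun t => (γ t).1) 0 := (hx.continuousAt)
    have := hc.continuousWithinAt (s := {(0:ℝ)}ᶜ)
    simpa [ContinuousWithinAt, h0] using this
  have lim1 : Tendsto (fun t => ((γ t).2 / t) ^ 2) (𝓝[≠] (0:ℝ)) (𝓝 (b ^ 2)) :=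
    hys.pow 2
  have lim2 : Tendsto (fun t => ((γ t).1 / t) ^ 2 - (γ t).1 ^ 2 * ((γ t).1 / t) ^ 2)
      (𝓝[≠] (0:ℝ)) (𝓝 (a ^ 2 - 0 ^ 2 * a ^ 2)) :=
    (hxs.pow 2).sub ((hxc.pow 2).mul (hxs.pow 2))
  have heq : (fun t => ((γ t).2 / t) ^ 2) =ᶠ[𝓝[≠] (0:ℝ)]
      (fun t => ((γ t).1 / t) ^ 2 - (γ t).1 ^ 2 * ((γ t).1 / t) ^ 2) := by
    have hmem : Set.Ioo (-ε) ε ∈ 𝓝[≠] (0:ℝ) :=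
      nhdsWithin_le_nhds (Ioo_mem_nhds (by linarith) hε)
    have hne : {(0:ℝ)}ᶜ ∈ 𝓝[≠] (0:ℝ) := self_mem_nhdsWithin
    filter_upwards [hmem, hne] with t ht htne
    have ht0 : t ≠ 0 := htne
    have h := hV t ht
    simp only [div_pow]
    rw [h]
    ring
  have lim1' : Tendsto (fun t => ((γ t).2 / t) ^ 2) (𝓝[≠] (0:ℝ)) (𝓝 (a ^ 2 - 0 ^ 2 * a ^ 2)) :=
    lim2.congr' heq.symm
  have := tendsto_nhds_unique lim1 lim1'
  simpa using this
end

section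
/- The four-leaved clover curve {(x, y) ∈ ℝ² : (x² + y²)³ = 4x²y²} is equal to the image of the C^∞ (indeed real-analytic) map θ ↦ (sin 2θ · cos θ, sin 2θ · sin θ) from ℝ to ℝ²; in particular, the entire curve is traced by a single smooth motion. -/
/-- The four-leaved clover `(x² + y²)³ = 4x²y²` is traced by the single smooth
(real-analytic) motion `θ ↦ (sin 2θ · cos θ, sin 2θ · sin θ)`: the curve equals the
image of this map. -/
theorem cloverCurve_singleSmoothMotion :
    {p : ℝ × ℝ | (p.1 ^ 2 + p.2 ^ 2) ^ 3 = 4 * p.1 ^ 2 * p.2 ^ 2} =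
      Set.range (fun θ : ℝ =>
        (Real.sin (2 * θ) * Real.cos θ, Real.sin (2 * θ) * Real.sin θ)) := by
  ext ⟨x, y⟩
  simp only [Set.mem_setOf_eq, Set.mem_range, Prod.mk.injEq]
  constructor
  · intro h
    by_cases hp : x = 0 ∧ y = 0
    · exact ⟨0, by simp [hp.1, hp.2]⟩
    · set z : ℂ := ⟨x, y⟩ with hzdef
      have hz : z ≠ 0 := by
        intro hz0
        apply hp
        constructor
        · simpa using congrArg Complex.re hz0
        · simpa using congrArg Complex.im hz0
      set r := ‖z‖ with hrdef
      have hr : 0 < r := norm_pos_iff.mpr hz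
      set θ := Complex.arg z with hθdef
      have hcos : Real.cos θ = x / r := by
        simpa [hzdef] using Complex.cos_arg hz
      have hsin : Real.sin θ = y / r := by
        simpa [hzdef] using Complex.sin_arg z
      have hr2 : r ^ 2 = x ^ 2 + y ^ 2 := by
        rw [hrdef, Complex.sq_norm, Complex.normSq_mk]; ring
      have hs2 : Real.sin (2 * θ) = 2 * x * y / r ^ 2 := by
        rw [Real.sin_two_mul, hsin, hcos]
        field_simp
      have hsq : Real.sin (2 * θ) ^ 2 = r ^ 2 := by
        rw [hs2]
        have hr6 : r ^ 6 = 4 * x ^ 2 * y ^ 2 := by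
          have : (r ^ 2) ^ 3 = 4 * x ^ 2 * y ^ 2 := by rw [hr2]; exact h
          linarith [this]
        field_simp
        nlinarith [hr.ne']
      rcases le_or_gt 0 (Real.sin (2 * θ)) with hpos | hneg
      · have heq : Real.sin (2 * θ) = r := by
          nlinarith [hsq]
        refine ⟨θ, ?_, ?_⟩
        · rw [heq, hcos]; field_simp
        · rw [heq, hsin]; field_simp
      · have heq : Real.sin (2 * θ) = -r := by
          nlinarith [hsq]
        refine ⟨θ + Real.pi, ?_, ?_⟩
        · have : Real.sin (2 * (θ + Real.pi)) = Real.sin (2 * θ) := by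
            rw [mul_add]
            simpa using Real.sin_add_two_pi (2 * θ)
          rw [this, Real.cos_add_pi, heq, hcos]
          field_simp
        · have : Real.sin (2 * (θ + Real.pi)) = Real.sin (2 * θ) := by
            rw [mul_add]
            simpa using Real.sin_add_two_pi (2 * θ)
          rw [this, Real.sin_add_pi, heq, hsin]
          field_simp
  · rintro ⟨θ, hx, hy⟩
    subst hx hy
    have h1 : Real.sin (2 * θ) = 2 * Real.sin θ * Real.cos θ := Real.sin_two_mul θ
    have h2 : Real.sin θ ^ 2 + Real.cos θ ^ 2 = 1 := Real.sin_sq_add_cos_sq θ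
    rw [h1]
    set s := Real.sin θ
    set c := Real.cos θ
    linear_combination (64 * s ^ 6 * c ^ 6 * ((s ^ 2 + c ^ 2) ^ 2 + (s ^ 2 + c ^ 2) + 1)) * h2
end

section
/- For every C^∞ curve γ : ℝ → ℝ² with γ(0) = (0, 0) and γ(t) ∈ {(x, y) ∈ ℝ² : (x² + y²)³ = 4x²y²} for all t in some open interval around 0, the components (a, b) = γ'(0) satisfy a · b = 0; that is, every tangent vector to a smooth motion in the four-leaved clover at the origin lies on one of the two coordinate axes, so the curve has exactly two tangent lines at the origin. -/
/-- Every tangent vector `(a, b)` at the origin to a smooth motion in the four-leaved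
clover `(x² + y²)³ = 4x²y²` satisfies `a·b = 0`, i.e. lies on one of the two coordinate
axes, so the curve has exactly two tangent lines at the origin. -/
theorem cloverCurve_tangentCone (γ : ℝ → ℝ × ℝ) (hγ : ContDiff ℝ (⊤ : ℕ∞) γ) (h0 : γ 0 = (0, 0))
    (hV : ∃ ε > 0, ∀ t ∈ Set.Ioo (-ε) ε,
      ((γ t).1 ^ 2 + (γ t).2 ^ 2) ^ 3 = 4 * (γ t).1 ^ 2 * (γ t).2 ^ 2) :
    (deriv γ 0).1 * (deriv γ 0).2 = 0 := by
  obtain ⟨ε, hε, hcl⟩ := hV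
  set a := (deriv γ 0).1
  set b := (deriv γ 0).2
  have hd : HasDerivAt γ (deriv γ 0) 0 :=
    ((hγ.differentiable (by simp)) 0).hasDerivAt
  have hx : HasDerivAt (fun t => (γ t).1) a 0 := hd.fst
  have hy : HasDerivAt (fun t => (γ t).2) b 0 := hd.snd
  have hxs : Filter.Tendsto (fun t => (γ t).1 / t) (nhdsWithin 0 {(0:ℝ)}ᶜ) (nhds a) := by
    have := hasDerivAt_iff_tendsto_slope.mp hx
    refine this.congr' ?_
    filter_upwards [self_mem_nhdsWithin] with t ht
    simp [slope, h0, div_eq_inv_mul]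
  have hys : Filter.Tendsto (fun t => (γ t).2 / t) (nhdsWithin 0 {(0:ℝ)}ᶜ) (nhds b) := by
    have := hasDerivAt_iff_tendsto_slope.mp hy
    refine this.congr' ?_
    filter_upwards [self_mem_nhdsWithin] with t ht
    simp [slope, h0, div_eq_inv_mul]
  -- f t = 4 (x/t)² (y/t)² tends to 4a²b²
  have hf : Filter.Tendsto (fun t => 4 * ((γ t).1 / t) ^ 2 * ((γ t).2 / t) ^ 2)
      (nhdsWithin 0 {(0:ℝ)}ᶜ) (nhds (4 * a ^ 2 * b ^ 2)) :=
    ((hxs.pow 2).const_mul 4).mul (hys.pow 2)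
  -- g t = t² * ((x/t)² + (y/t)²)³ tends to 0
  have hg : Filter.Tendsto (fun t : ℝ => t ^ 2 * (((γ t).1 / t) ^ 2 + ((γ t).2 / t) ^ 2) ^ 3)
      (nhdsWithin 0 {(0:ℝ)}ᶜ) (nhds 0) := by
    have h1 : Filter.Tendsto (fun t : ℝ => t ^ 2) (nhdsWithin 0 {(0:ℝ)}ᶜ) (nhds 0) := by
      have : Filter.Tendsto (fun t : ℝ => t ^ 2) (nhds 0) (nhds 0) := by
        simpa using (continuous_pow 2).tendsto (0 : ℝ)
      exact this.mono_left nhdsWithin_le_nhds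
    simpa using h1.mul (((hxs.pow 2).add (hys.pow 2)).pow 3)
  -- f = g eventually on the punctured nhd
  have heq : (fun t => 4 * ((γ t).1 / t) ^ 2 * ((γ t).2 / t) ^ 2) =ᶠ[nhdsWithin 0 {(0:ℝ)}ᶜ]
      (fun t : ℝ => t ^ 2 * (((γ t).1 / t) ^ 2 + ((γ t).2 / t) ^ 2) ^ 3) := by
    have hmem : Set.Ioo (-ε) ε ∈ nhdsWithin (0:ℝ) {(0:ℝ)}ᶜ := by
      apply nhdsWithin_le_nhds
      exact Ioo_mem_nhds (by linarith) hε
    filter_upwards [hmem, self_mem_nhdsWithin] with t ht htn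
    have ht0 : t ≠ 0 := htn
    have hc := hcl t ht
    field_simp
    linear_combination -hc
  have := tendsto_nhds_unique (hf.congr' heq) hg
  nlinarith [sq_nonneg (a * b), sq_nonneg a, sq_nonneg b]
end
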